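/- Let s0 > 0. Then there exists a constant C (depending only on s0) such that for all s ≥ s0, ∫_{1}^{∞} (Φ'(z))² / ( Φ(z+s) - Φ(z) ) dz ≤ C; indeed the integrand is bounded above for z ≥ 1 by a constant multiple (depending on s0) of 1/z². -/

import Mathlib

open MeasureTheory Real Set Filter

/-- The standard normal density `Φ'(z) = (1/√(2π)) e^{-z²/2}`. -/
noncomputable def Φ' (z : ℝ) : ℝ := (Real.sqrt (2 * Real.pi))⁻¹ * Real.exp (-z ^ 2 / 2)

/-- The standard normal cumulative distribution function `Φ`. -/
noncomputable def Φ (z : ℝ) : ℝ := ∫ u in Set.Iic z, Φ' u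

/-!
For `z ≥ 0` and `s ≥ s0`, monotonicity of `Φ` and the decrease of `Φ'` on `[0, ∞)` give
`Φ(z+s) - Φ(z) ≥ s0 Φ'(z+s0)`. Completing the square,
`Φ'(z)² / Φ'(z+s0) = Φ'(0) e^{s0²} e^{-(z-s0)²/2}`, and `z² e^{-(z-s0)²/2} ≤ 4 + 2 s0²`
since `x² e^{-x²/2} ≤ 2`. So the integrand is at most `M / z²`, which is integrable on `(1, ∞)`.
-/

lemma Φ'_pos (z : ℝ) : 0 < Φ' z := by
  unfold Φ'
  positivity

lemma continuous_Φ' : Continuous Φ' := by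
  unfold Φ'
  fun_prop

lemma integrable_Φ' : Integrable Φ' := by
  refine ((integrable_exp_neg_mul_sq (b := 1 / 2) (by norm_num)).const_mul
    (√(2 * π))⁻¹).congr (.of_forall fun z => ?_)
  unfold Φ'
  ring_nf

lemma antitoneOn_Φ' : AntitoneOn Φ' (Ici 0) := fun a ha b _ hab => by
  unfold Φ'
  gcongr

lemma Φ_sub_eq_intervalIntegral (a b : ℝ) : Φ b - Φ a = ∫ u in a..b, Φ' u :=
  intervalIntegral.integral_Iic_sub_Iic (a := a) (b := b) integrable_Φ'.integrableOn
    integrable_Φ'.integrableOn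

lemma monotone_Φ : Monotone Φ := fun a b hab => by
  rw [← sub_nonneg, Φ_sub_eq_intervalIntegral]
  exact intervalIntegral.integral_nonneg hab fun u _ => (Φ'_pos u).le

lemma mul_Φ'_le_Φ_add_sub {z t : ℝ} (hz : 0 ≤ z) (ht : 0 ≤ t) :
    t * Φ' (z + t) ≤ Φ (z + t) - Φ z := by
  have hzt : z ≤ z + t := le_add_of_nonneg_right ht
  calc t * Φ' (z + t) = ∫ _ in z..z + t, Φ' (z + t) := by simp
    _ ≤ ∫ u in z..z + t, Φ' u :=
      intervalIntegral.integral_mono_on hzt intervalIntegrable_const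
        integrable_Φ'.intervalIntegrable
        fun u hu => antitoneOn_Φ' (hz.trans hu.1) (hz.trans hzt) hu.2
    _ = Φ (z + t) - Φ z := (Φ_sub_eq_intervalIntegral _ _).symm

lemma Φ'_sq_div_Φ'_add (z t : ℝ) :
    Φ' z ^ 2 / Φ' (z + t) = (√(2 * π))⁻¹ * exp (t ^ 2) * exp (-(z - t) ^ 2 / 2) := by
  have hsq : t ^ 2 + -(z - t) ^ 2 / 2 = -z ^ 2 / 2 + -z ^ 2 / 2 - -(z + t) ^ 2 / 2 := by ring
  rw [mul_assoc, ← exp_add, hsq, exp_sub, exp_add]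
  unfold Φ'
  field_simp

lemma sq_mul_exp_neg_sq_div_two_le (x : ℝ) : x ^ 2 * exp (-x ^ 2 / 2) ≤ 2 := by
  have h := add_one_le_exp (x ^ 2 / 2)
  rw [neg_div, exp_neg, ← div_eq_mul_inv, div_le_iff₀ (exp_pos _)]
  linarith

lemma sq_mul_exp_neg_sub_sq_div_two_le (z t : ℝ) :
    z ^ 2 * exp (-(z - t) ^ 2 / 2) ≤ 4 + 2 * t ^ 2 := by
  have h₁ := sq_mul_exp_neg_sq_div_two_le (z - t)
  have h₂ : exp (-(z - t) ^ 2 / 2) ≤ 1 := exp_le_one_iff.mpr (by nlinarith)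
  have h₃ : z ^ 2 ≤ 2 * (z - t) ^ 2 + 2 * t ^ 2 := by nlinarith [sq_nonneg (z - 2 * t)]
  nlinarith [exp_pos (-(z - t) ^ 2 / 2), sq_nonneg t]

lemma Φ'_sq_div_Φ_sub_nonneg {s : ℝ} (hs : 0 ≤ s) (z : ℝ) : 0 ≤ Φ' z ^ 2 / (Φ (z + s) - Φ z) :=
  div_nonneg (sq_nonneg _) (sub_nonneg.mpr (monotone_Φ (le_add_of_nonneg_right hs)))

lemma Φ'_sq_div_Φ_sub_le {s0 s z : ℝ} (hs0 : 0 < s0) (hs : s0 ≤ s) (hz : 0 < z) :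
    Φ' z ^ 2 / (Φ (z + s) - Φ z) ≤
      (√(2 * π))⁻¹ * exp (s0 ^ 2) * (4 + 2 * s0 ^ 2) / s0 / z ^ 2 := by
  have hden : s0 * Φ' (z + s0) ≤ Φ (z + s) - Φ z :=
    (mul_Φ'_le_Φ_add_sub hz.le hs0.le).trans
      (sub_le_sub_right (monotone_Φ (by linarith)) _)
  have hpos := Φ'_pos (z + s0)
  calc Φ' z ^ 2 / (Φ (z + s) - Φ z) ≤ Φ' z ^ 2 / (s0 * Φ' (z + s0)) :=
        div_le_div_of_nonneg_left (sq_nonneg _) (by positivity) hden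
    _ = (√(2 * π))⁻¹ * exp (s0 ^ 2) * (z ^ 2 * exp (-(z - s0) ^ 2 / 2)) / s0 / z ^ 2 := by
        rw [mul_comm s0, ← div_div, Φ'_sq_div_Φ'_add]
        field_simp
    _ ≤ (√(2 * π))⁻¹ * exp (s0 ^ 2) * (4 + 2 * s0 ^ 2) / s0 / z ^ 2 := by
        gcongr
        exact sq_mul_exp_neg_sub_sq_div_two_le z s0

lemma integrableOn_Ioi_div_sq (M : ℝ) {c : ℝ} (hc : 0 < c) :
    IntegrableOn (fun z : ℝ => M / z ^ 2) (Ioi c) := by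
  refine IntegrableOn.congr_fun
    ((integrableOn_Ioi_rpow_of_lt (by norm_num : (-2 : ℝ) < -1) hc).const_mul M)
    (fun z hz => ?_) measurableSet_Ioi
  rw [rpow_neg (hc.trans hz).le, rpow_two, div_eq_mul_inv]

lemma integrableOn_Φ'_sq_div_Φ_sub {s0 s c : ℝ} (hs0 : 0 < s0) (hs : s0 ≤ s) (hc : 0 < c) :
    IntegrableOn (fun z : ℝ => Φ' z ^ 2 / (Φ (z + s) - Φ z)) (Ioi c) := by
  have hmeas : Measurable fun z : ℝ => Φ' z ^ 2 / (Φ (z + s) - Φ z) :=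
    (continuous_Φ'.pow 2).measurable.div
      ((monotone_Φ.measurable.comp (measurable_add_const s)).sub monotone_Φ.measurable)
  have hbound := fun z (hz : z ∈ Ioi c) =>
    (norm_of_nonneg (Φ'_sq_div_Φ_sub_nonneg (hs0.le.trans hs) z)).trans_le
      (Φ'_sq_div_Φ_sub_le hs0 hs (hc.trans hz))
  exact (integrableOn_Ioi_div_sq _ hc).mono' hmeas.aestronglyMeasurable
    ((ae_restrict_iff' measurableSet_Ioi).mpr (.of_forall hbound))

/-- uniform bound on `∫_1^∞ (Φ'(z))²/(Φ(z+s) - Φ(z)) dz` for `s ≥ s0`, the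
integrand being dominated by a constant multiple of `1/z²` on `[1, ∞)`. -/
theorem tail_bound (s0 : ℝ) (hs0 : 0 < s0) :
    ∃ C M : ℝ, ∀ s : ℝ, s0 ≤ s →
      IntegrableOn (fun z : ℝ => (Φ' z) ^ 2 / (Φ (z + s) - Φ z)) (Set.Ioi 1) volume ∧
      (∫ z in Set.Ioi (1:ℝ), (Φ' z) ^ 2 / (Φ (z + s) - Φ z)) ≤ C ∧
      ∀ z : ℝ, 1 ≤ z → (Φ' z) ^ 2 / (Φ (z + s) - Φ z) ≤ M / z ^ 2 := by
  set M := (√(2 * π))⁻¹ * exp (s0 ^ 2) * (4 + 2 * s0 ^ 2) / s0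
  have hbound {s z : ℝ} (hs : s0 ≤ s) (hz : 0 < z) : Φ' z ^ 2 / (Φ (z + s) - Φ z) ≤ M / z ^ 2 :=
    Φ'_sq_div_Φ_sub_le hs0 hs hz
  refine ⟨∫ z in Ioi (1 : ℝ), M / z ^ 2, M, fun s hs => ⟨?_, ?_, fun z hz => hbound hs (by linarith)⟩⟩
  · exact integrableOn_Φ'_sq_div_Φ_sub hs0 hs one_pos
  · exact setIntegral_mono_on (integrableOn_Φ'_sq_div_Φ_sub hs0 hs one_pos)
      (integrableOn_Ioi_div_sq M one_pos) measurableSet_Ioi fun z hz => hbound hs (one_pos.trans hz)
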